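/- Let A and B be symmetric positive definite n×n real matrices, and set X = {x ∈ ℝⁿ : ⟨Ax, x⟩ ≤ ℏ} and P = {p ∈ ℝⁿ : ⟨Bp, p⟩ ≤ ℏ}. Then X^ℏ ⊆ P if and only if A ≤ B⁻¹ in the Löwner order (i.e. B⁻¹ − A is positive semidefinite), and X^ℏ = P if and only if A·B = I. -/

import Mathlib

/-!
The `ℏ`-polar of the ellipsoid `{x | ⟨Mx, x⟩ ≤ ℏ}` is `{p | ⟨M⁻¹p, p⟩ ≤ ℏ}`: one inclusion is
`2⟨x, p⟩ ≤ ⟨Mx, x⟩ + ⟨M⁻¹p, p⟩` (the form is nonnegative at `x - M⁻¹p`), the other comes from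
testing `p` against the point of the boundary in the direction `M⁻¹p`. By homogeneity, inclusion
of ellipsoids is the reverse Löwner order of their matrices, so `X^ℏ ⊆ P` means `B ≤ A⁻¹`, and
`X^ℏ = P` means `A⁻¹ = B`. Since polarity reverses inclusions, the same dictionary shows that
inversion is Löwner-antitone, which turns `B ≤ A⁻¹` into `A ≤ B⁻¹`.
-/

open scoped RealInnerProductSpace

noncomputable section

abbrev En (n : ℕ) := EuclideanSpace ℝ (Fin n)

def qf {m : Type*} [Fintype m] [DecidableEq m] (M : Matrix m m ℝ)
    (z : EuclideanSpace ℝ m) : ℝ := ⟪(Matrix.toEuclideanLin M) z, z⟫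

def polarDual (n : ℕ) (ℏ : ℝ) (X : Set (En n)) : Set (En n) :=
  {p | ∀ x ∈ X, ⟪x, p⟫ ≤ ℏ}

open scoped MatrixOrder

section QuadraticForm

variable {m : Type*} [Fintype m] [DecidableEq m]

lemma posSemidef_iff_forall_qf_nonneg {M : Matrix m m ℝ} (hM : M.IsHermitian) :
    M.PosSemidef ↔ ∀ z, 0 ≤ qf M z := by
  rw [← Matrix.isPositive_toEuclideanLin_iff, LinearMap.isPositive_iff,
    Matrix.isSymmetric_toEuclideanLin_iff]
  exact and_iff_right hM

lemma Matrix.PosSemidef.qf_nonneg {M : Matrix m m ℝ} (hM : M.PosSemidef)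
    (z : EuclideanSpace ℝ m) : 0 ≤ qf M z :=
  (posSemidef_iff_forall_qf_nonneg hM.isHermitian).mp hM z

lemma Matrix.PosDef.qf_pos {M : Matrix m m ℝ} (hM : M.PosDef) {z : EuclideanSpace ℝ m}
    (hz : z ≠ 0) : 0 < qf M z := by
  have := hM.dotProduct_mulVec_pos (x := WithLp.ofLp z) (by simpa using hz)
  simpa [qf, EuclideanSpace.inner_eq_star_dotProduct, dotProduct_comm] using this

lemma qf_smul (M : Matrix m m ℝ) (t : ℝ) (z : EuclideanSpace ℝ m) :
    qf M (t • z) = t ^ 2 * qf M z := by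
  simp only [qf, map_smul, real_inner_smul_left, real_inner_smul_right]
  ring

lemma qf_sub (C D : Matrix m m ℝ) (z : EuclideanSpace ℝ m) :
    qf (C - D) z = qf C z - qf D z := by
  simp only [qf, map_sub, LinearMap.sub_apply, inner_sub_left]

lemma qf_sqrt_div_smul {M : Matrix m m ℝ} {z : EuclideanSpace ℝ m} (hz : 0 < qf M z)
    {ℏ : ℝ} (hℏ : 0 ≤ ℏ) : qf M (√(ℏ / qf M z) • z) = ℏ := by
  rw [qf_smul, Real.sq_sqrt (div_nonneg hℏ hz.le), div_mul_cancel₀ _ hz.ne']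

lemma toEuclideanLin_mul_inv_apply {M : Matrix m m ℝ} (hM : IsUnit M.det)
    (p : EuclideanSpace ℝ m) : M.toEuclideanLin (M⁻¹.toEuclideanLin p) = p := by
  simp [Matrix.toLpLin_apply, Matrix.mulVec_mulVec, Matrix.mul_nonsing_inv _ hM]

lemma qf_toEuclideanLin_inv_apply {M : Matrix m m ℝ} (hM : IsUnit M.det)
    (p : EuclideanSpace ℝ m) : qf M (M⁻¹.toEuclideanLin p) = qf M⁻¹ p := by
  rw [qf, toEuclideanLin_mul_inv_apply hM, qf, real_inner_comm]

lemma two_mul_inner_le_qf_add_qf_inv {M : Matrix m m ℝ} (hM : M.PosDef)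
    (x p : EuclideanSpace ℝ m) : 2 * ⟪x, p⟫ ≤ qf M x + qf M⁻¹ p := by
  set q := M⁻¹.toEuclideanLin p
  have hMq : M.toEuclideanLin q = p := toEuclideanLin_mul_inv_apply hM.det_pos.ne'.isUnit p
  have hsymm := Matrix.isSymmetric_toEuclideanLin_iff.mpr hM.isHermitian x q
  have hsq : 0 ≤ qf M (x - q) := hM.posSemidef.qf_nonneg (x - q)
  have hqp : qf M⁻¹ p = ⟪q, p⟫ := rfl
  simp only [qf, map_sub, inner_sub_left, inner_sub_right, hsymm, hMq] at hsq
  rw [hqp, qf]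
  linarith [real_inner_comm x p, real_inner_comm q p]

lemma setOf_qf_le_subset_iff {ℏ : ℝ} (hℏ : 0 < ℏ) {C D : Matrix m m ℝ} (hC : C.PosDef)
    (hD : D.IsHermitian) :
    {z : EuclideanSpace ℝ m | qf C z ≤ ℏ} ⊆ {z | qf D z ≤ ℏ} ↔ D ≤ C := by
  rw [Matrix.le_iff, posSemidef_iff_forall_qf_nonneg (hC.isHermitian.sub hD)]
  simp only [qf_sub, sub_nonneg]
  constructor
  · intro h z
    rcases eq_or_ne z 0 with rfl | hz
    · simp [qf]
    have hCz := hC.qf_pos hz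
    have hCt := qf_sqrt_div_smul hCz hℏ.le
    have hDt := (h hCt.le).out.trans hCt.ge
    rw [qf_smul, qf_smul] at hDt
    exact le_of_mul_le_mul_left hDt (by positivity)
  · exact fun h z hz => (h z).trans hz

lemma setOf_qf_le_eq_iff {ℏ : ℝ} (hℏ : 0 < ℏ) {C D : Matrix m m ℝ} (hC : C.PosDef)
    (hD : D.PosDef) :
    {z : EuclideanSpace ℝ m | qf C z ≤ ℏ} = {z | qf D z ≤ ℏ} ↔ C = D := by
  rw [Set.Subset.antisymm_iff, setOf_qf_le_subset_iff hℏ hC hD.isHermitian,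
    setOf_qf_le_subset_iff hℏ hD hC.isHermitian, and_comm, ← le_antisymm_iff]

end QuadraticForm

lemma polarDual_antitone (n : ℕ) (ℏ : ℝ) : Antitone (polarDual n ℏ) :=
  fun _ _ hXY _ hp x hx => hp x (hXY hx)

lemma qf_inv_le_of_mem_polarDual {n : ℕ} {ℏ : ℝ} (hℏ : 0 < ℏ) {M : Matrix (Fin n) (Fin n) ℝ}
    (hM : M.PosDef) {p : En n} (hp : p ∈ polarDual n ℏ {x | qf M x ≤ ℏ}) : qf M⁻¹ p ≤ ℏ := by
  set q := M⁻¹.toEuclideanLin p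
  set s := qf M⁻¹ p
  have hqp : ⟪q, p⟫ = s := rfl
  have hqq : qf M q = s := qf_toEuclideanLin_inv_apply hM.det_pos.ne'.isUnit p
  have hs : 0 ≤ s := hM.inv.posSemidef.qf_nonneg p
  rcases hs.eq_or_lt with h0 | hpos
  · linarith
  set t := √(ℏ / s)
  have hts : t * s ≤ ℏ := by
    have hx := qf_sqrt_div_smul (by rwa [hqq]) hℏ.le
    rw [hqq] at hx
    simpa only [real_inner_smul_left, hqp] using hp _ hx.le
  have ht2 : t ^ 2 = ℏ / s := Real.sq_sqrt (div_nonneg hℏ.le hpos.le)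
  have : ℏ * s ≤ ℏ * ℏ := by
    calc ℏ * s = (t * s) ^ 2 := by rw [mul_pow, ht2]; field_simp
      _ ≤ ℏ ^ 2 := by gcongr
      _ = ℏ * ℏ := sq ℏ
  exact le_of_mul_le_mul_left this hℏ

lemma polarDual_setOf_qf_le {n : ℕ} {ℏ : ℝ} (hℏ : 0 < ℏ) {M : Matrix (Fin n) (Fin n) ℝ}
    (hM : M.PosDef) : polarDual n ℏ {x | qf M x ≤ ℏ} = {p | qf M⁻¹ p ≤ ℏ} := by
  ext p
  refine ⟨qf_inv_le_of_mem_polarDual hℏ hM, fun hp x hx => ?_⟩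
  linarith [two_mul_inner_le_qf_add_qf_inv hM x p, hp.out, hx.out]

lemma Matrix.PosDef.inv_le_inv_of_le {n : ℕ} {C D : Matrix (Fin n) (Fin n) ℝ} (hC : C.PosDef)
    (hD : D.PosDef) (h : D ≤ C) : C⁻¹ ≤ D⁻¹ := by
  rw [← setOf_qf_le_subset_iff one_pos hD.inv hC.inv.isHermitian,
    ← polarDual_setOf_qf_le one_pos hC, ← polarDual_setOf_qf_le one_pos hD]
  exact polarDual_antitone n 1 ((setOf_qf_le_subset_iff one_pos hC hD.isHermitian).mpr h)

lemma Matrix.PosDef.le_inv_iff_le_inv {n : ℕ} {A B : Matrix (Fin n) (Fin n) ℝ} (hA : A.PosDef)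
    (hB : B.PosDef) : B ≤ A⁻¹ ↔ A ≤ B⁻¹ := by
  have inv_inv_eq {M : Matrix (Fin n) (Fin n) ℝ} (hM : M.PosDef) : M⁻¹⁻¹ = M :=
    M.nonsing_inv_nonsing_inv hM.det_pos.ne'.isUnit
  refine ⟨fun h => ?_, fun h => ?_⟩
  · simpa only [inv_inv_eq hA] using hA.inv.inv_le_inv_of_le hB h
  · simpa only [inv_inv_eq hB] using hB.inv.inv_le_inv_of_le hA h

/-- for the ellipsoids `X = {⟨Ax,x⟩ ≤ ℏ}` and `P = {⟨Bp,p⟩ ≤ ℏ}` with `A, B`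
symmetric positive definite, `Xᵸ ⊆ P ↔ A ≤ B⁻¹` (Löwner order) and `Xᵸ = P ↔ AB = 1`. -/
theorem stmt0 (n : ℕ) (ℏ : ℝ) (hℏ : 0 < ℏ)
    (A B : Matrix (Fin n) (Fin n) ℝ) (hA : A.PosDef) (hB : B.PosDef) :
    (polarDual n ℏ {x | qf A x ≤ ℏ} ⊆ {p | qf B p ≤ ℏ} ↔ (B⁻¹ - A).PosSemidef) ∧
    (polarDual n ℏ {x | qf A x ≤ ℏ} = {p | qf B p ≤ ℏ} ↔ A * B = 1) := by
  rw [polarDual_setOf_qf_le hℏ hA, setOf_qf_le_subset_iff hℏ hA.inv hB.isHermitian,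
    setOf_qf_le_eq_iff hℏ hA.inv hB, hA.le_inv_iff_le_inv hB]
  exact ⟨Iff.rfl, ⟨fun h => h ▸ A.mul_nonsing_inv hA.det_pos.ne'.isUnit, Matrix.inv_eq_right_inv⟩⟩
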